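/- Let n1, n2, n3, n4, m be nonnegative integers with n1 > n2, n4 ≥ n3, and m ≤ n2; let q = max(n1, n2, n3, n4, m) and let Q be the q×q shift matrix over 𝔽₂. Then there exist q×q matrices G_A, G_B over 𝔽₂ such that, with G_S = Q^{q−n3} G_A Q^{q−n1} + Q^{q−n4} G_B Q^{q−n2} and G_M = Q^{q−n3} G_A Q^{q−m} + Q^{q−n4} G_B Q^{q−m}, one has G_M = 0 and rank(G_S) − dim(range(G_S) ∩ range(G_M)) = min(n1, n4, n2 + n3 − m). -/

import Mathlib

/-- The `q × q` lower shift matrix over `𝔽₂`: entry `(i, j)` is `1` iff `i = j + 1`. -/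
def shiftQ (q : ℕ) : Matrix (Fin q) (Fin q) (ZMod 2) :=
  Matrix.of fun i j => if (i : ℕ) = (j : ℕ) + 1 then 1 else 0

/-- Source-to-destination transfer matrix
`G_S = Q^(q-n3) G_A Q^(q-n1) + Q^(q-n4) G_B Q^(q-n2)`. -/
def GSmat (q n1 n2 n3 n4 : ℕ) (GA GB : Matrix (Fin q) (Fin q) (ZMod 2)) :
    Matrix (Fin q) (Fin q) (ZMod 2) :=
  shiftQ q ^ (q - n3) * GA * shiftQ q ^ (q - n1) +
    shiftQ q ^ (q - n4) * GB * shiftQ q ^ (q - n2)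

/-- Interference transfer matrix
`G_M = Q^(q-n3) G_A Q^(q-m) + Q^(q-n4) G_B Q^(q-m)`. -/
def GMmat (q n3 n4 m : ℕ) (GA GB : Matrix (Fin q) (Fin q) (ZMod 2)) :
    Matrix (Fin q) (Fin q) (ZMod 2) :=
  shiftQ q ^ (q - n3) * GA * shiftQ q ^ (q - m) +
    shiftQ q ^ (q - n4) * GB * shiftQ q ^ (q - m)

/-- The achievable rate `rank G_S - dim (range G_S ∩ range G_M)` of a linear scheme. -/
noncomputable def linRate (q : ℕ) (GS GM : Matrix (Fin q) (Fin q) (ZMod 2)) : ℕ :=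
  GS.rank - Module.finrank (ZMod 2)
    ↥(LinearMap.range GS.mulVecLin ⊓ LinearMap.range GM.mulVecLin)

/-!
Let relay B send `Q^(n4-n3) G_A + E`. Both relays receive the interferer on the same
coordinates, so its two copies reach the destination aligned and cancel in characteristic 2,
leaving `G_M = Q^(q-n4) E Q^(q-m)`, while the source arrives as
`Q^(q-n3) G_A (1 + Q^(n1-n2)) Q^(q-n1) + Q^(q-n4) E Q^(q-n2)`. As `Q` is nilpotent and
`n1 > n2`, the factor `1 + Q^(n1-n2)` is invertible, so relay A can deliver any matrix supported
on the rows and columns it reaches, and `E` any matrix supported on the levels `j < n2 - m` that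
relay B receives free of interference (which makes `G_M = 0`). Splitting `Q^(q-R)`, of rank
`R = min(n1, n4, n2 + n3 - m)`, into its columns `j < min(R, n2 - m)`, sent by relay B, and
the remaining (at most `n3`) columns, sent by relay A, realises `G_S = Q^(q-R)`.
-/

open Matrix

section

variable {q n1 n2 n3 n4 m : ℕ}

lemma mul_shiftQ_apply (X : Matrix (Fin q) (Fin q) (ZMod 2)) (i j : Fin q) :
    (X * shiftQ q) i j = if h : (j : ℕ) + 1 < q then X i ⟨j + 1, h⟩ else 0 := by
  rw [mul_apply]
  split_ifs with h
  · rw [Finset.sum_eq_single ⟨j + 1, h⟩] <;> simp +contextual [shiftQ, Fin.ext_iff]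
  · exact Finset.sum_eq_zero fun k _ => by simp [shiftQ]; omega

lemma shiftQ_mul_apply (X : Matrix (Fin q) (Fin q) (ZMod 2)) (i j : Fin q) :
    (shiftQ q * X) i j = if h : 1 ≤ (i : ℕ) then X ⟨i - 1, by omega⟩ j else 0 := by
  rw [mul_apply]
  split_ifs with h
  · rw [Finset.sum_eq_single ⟨i - 1, by omega⟩]
    · simp [shiftQ]; omega
    · intro k _ hk; simp [shiftQ, Fin.ext_iff] at hk ⊢; omega
    · simp
  · exact Finset.sum_eq_zero fun k _ => by simp [shiftQ]; omega

lemma mul_shiftQ_pow_apply (X : Matrix (Fin q) (Fin q) (ZMod 2)) (b : ℕ) (i j : Fin q) :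
    (X * shiftQ q ^ b) i j = if h : (j : ℕ) + b < q then X i ⟨j + b, h⟩ else 0 := by
  induction b generalizing j with
  | zero => simp
  | succ b ih =>
    rw [pow_succ, ← mul_assoc, mul_shiftQ_apply]
    by_cases h : (j : ℕ) + (b + 1) < q
    · simp only [dif_pos h, dif_pos (show (j : ℕ) + 1 < q by omega), ih,
        Nat.add_right_comm _ 1 b, add_assoc]
    · simp only [dif_neg h, ih]
      split_ifs <;> first | rfl | omega

lemma shiftQ_pow_mul_apply (X : Matrix (Fin q) (Fin q) (ZMod 2)) (a : ℕ) (i j : Fin q) :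
    (shiftQ q ^ a * X) i j = if h : a ≤ (i : ℕ) then X ⟨i - a, by omega⟩ j else 0 := by
  induction a generalizing i with
  | zero => simp
  | succ a ih =>
    rw [pow_succ', mul_assoc, shiftQ_mul_apply]
    by_cases h : a + 1 ≤ (i : ℕ)
    · simp only [dif_pos h, dif_pos (show 1 ≤ (i : ℕ) by omega), ih,
        dif_pos (show a ≤ (i : ℕ) - 1 by omega), Nat.sub_sub, Nat.add_comm 1 a]
    · simp only [dif_neg h, ih]
      split_ifs <;> first | rfl | omega

lemma shiftQ_pow_apply (k : ℕ) (i j : Fin q) :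
    (shiftQ q ^ k) i j = if (i : ℕ) = j + k then 1 else 0 := by
  rw [← one_mul (shiftQ q ^ k), mul_shiftQ_pow_apply]
  split_ifs with h₁ h₂ h₂ <;> simp [one_apply, Fin.ext_iff] <;> omega

lemma isNilpotent_shiftQ : IsNilpotent (shiftQ q) := ⟨q, by
  ext i j
  rw [shiftQ_pow_apply, if_neg (by omega), Matrix.zero_apply]⟩

lemma isUnit_one_add_shiftQ_pow {d : ℕ} (hd : d ≠ 0) : IsUnit (1 + shiftQ q ^ d) :=
  (isNilpotent_shiftQ.pow_of_pos hd).isUnit_one_add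

lemma exists_shiftQ_pow_mul_mul_shiftQ_pow_eq (a b : ℕ) (T : Matrix (Fin q) (Fin q) (ZMod 2))
    (hT : ∀ i j, T i j ≠ 0 → a ≤ (i : ℕ) ∧ (j : ℕ) + b < q) :
    ∃ X, shiftQ q ^ a * X * shiftQ q ^ b = T := by
  refine ⟨of fun r c => if h : r + a < q ∧ b ≤ c then T ⟨r + a, h.1⟩ ⟨c - b, by omega⟩ else 0, ?_⟩
  ext i j
  by_cases hij : a ≤ (i : ℕ) ∧ (j : ℕ) + b < q
  · simp [mul_shiftQ_pow_apply, shiftQ_pow_mul_apply, hij, Nat.sub_add_cancel hij.1]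
  · have := mt (hT i j) (by simpa using hij)
    simp only [mul_shiftQ_pow_apply, shiftQ_pow_mul_apply]
    split_ifs <;> simp_all

lemma rank_shiftQ_pow (k : ℕ) : (shiftQ q ^ k).rank = q - k := by
  let P : Matrix (Fin q) (Fin q) (ZMod 2) := diagonal fun j => if (j : ℕ) < q - k then 1 else 0
  have hP : P.rank = q - k := by
    rw [rank_diagonal, Fintype.card_subtype]
    simp only [ne_eq, ite_eq_right_iff, one_ne_zero, imp_false, not_not]
    rw [Fin.card_filter_val_lt]
    omega
  have hQP : shiftQ q ^ k * P = shiftQ q ^ k := by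
    ext i j
    have := i.isLt
    rw [mul_diagonal, shiftQ_pow_apply]
    split_ifs <;> first | omega | simp
  obtain ⟨X, hX⟩ := exists_shiftQ_pow_mul_mul_shiftQ_pow_eq 0 k P fun i j hij => by
    simp only [P, diagonal_apply] at hij
    split_ifs at hij with hij' hj
    · subst hij'; omega
    all_goals exact absurd rfl hij
  apply le_antisymm
  · calc (shiftQ q ^ k).rank = (shiftQ q ^ k * P).rank := by rw [hQP]
      _ ≤ q - k := hP ▸ rank_mul_le_right _ _
  · calc q - k = (shiftQ q ^ 0 * X * shiftQ q ^ k).rank := by rw [hX, hP]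
      _ ≤ (shiftQ q ^ k).rank := rank_mul_le_right _ _

lemma GMmat_add_shiftQ_pow_mul (h34 : n3 ≤ n4) (h4 : n4 ≤ q)
    (GA E : Matrix (Fin q) (Fin q) (ZMod 2)) :
    GMmat q n3 n4 m GA (shiftQ q ^ (n4 - n3) * GA + E) =
      shiftQ q ^ (q - n4) * E * shiftQ q ^ (q - m) := by
  have h3 : shiftQ q ^ (q - n4) * shiftQ q ^ (n4 - n3) = shiftQ q ^ (q - n3) := by
    rw [← pow_add]; congr 1; omega
  have add_self : ∀ X : Matrix (Fin q) (Fin q) (ZMod 2), X + X = 0 := fun X => by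
    ext; exact CharTwo.add_self_eq_zero _
  rw [GMmat, mul_add, add_mul, ← mul_assoc, h3, ← add_assoc, add_self, zero_add]

lemma GSmat_add_shiftQ_pow_mul (h21 : n2 ≤ n1) (h1 : n1 ≤ q) (h34 : n3 ≤ n4) (h4 : n4 ≤ q)
    (GA E : Matrix (Fin q) (Fin q) (ZMod 2)) :
    GSmat q n1 n2 n3 n4 GA (shiftQ q ^ (n4 - n3) * GA + E) =
      shiftQ q ^ (q - n3) * (GA * (1 + shiftQ q ^ (n1 - n2))) * shiftQ q ^ (q - n1) +
        shiftQ q ^ (q - n4) * E * shiftQ q ^ (q - n2) := by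
  have h3 : shiftQ q ^ (q - n4) * shiftQ q ^ (n4 - n3) = shiftQ q ^ (q - n3) := by
    rw [← pow_add]; congr 1; omega
  have h2 : shiftQ q ^ (n1 - n2) * shiftQ q ^ (q - n1) = shiftQ q ^ (q - n2) := by
    rw [← pow_add]; congr 1; omega
  rw [GSmat, ← h3, ← h2]
  simp only [mul_add, add_mul, mul_assoc, mul_one]
  abel

lemma exists_GMmat_eq_zero_and_GSmat_eq (h12 : n2 < n1) (h1 : n1 ≤ q) (h34 : n3 ≤ n4)
    (h4 : n4 ≤ q) (hm : m ≤ n2) (TA TB : Matrix (Fin q) (Fin q) (ZMod 2))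
    (hA : ∀ i j, TA i j ≠ 0 → q - n3 ≤ (i : ℕ) ∧ (j : ℕ) < n1)
    (hB : ∀ i j, TB i j ≠ 0 → q - n4 ≤ (i : ℕ) ∧ (j : ℕ) < n2 - m) :
    ∃ GA GB, GMmat q n3 n4 m GA GB = 0 ∧ GSmat q n1 n2 n3 n4 GA GB = TA + TB := by
  obtain ⟨C, hC⟩ := (isUnit_one_add_shiftQ_pow (q := q) (Nat.sub_ne_zero_of_lt h12)).exists_left_inv
  obtain ⟨M, hM⟩ := exists_shiftQ_pow_mul_mul_shiftQ_pow_eq (q - n3) (q - n1) TA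
    fun i j hij => by have := hA i j hij; omega
  obtain ⟨E, hE⟩ := exists_shiftQ_pow_mul_mul_shiftQ_pow_eq (q - n4) (q - n2) TB
    fun i j hij => by have := hB i j hij; omega
  refine ⟨M * C, shiftQ q ^ (n4 - n3) * (M * C) + E, ?_, ?_⟩
  · rw [GMmat_add_shiftQ_pow_mul h34 h4, show q - m = q - n2 + (n2 - m) by omega, pow_add,
      ← mul_assoc, hE]
    ext i j
    rw [mul_shiftQ_pow_apply, Matrix.zero_apply]
    split_ifs with h
    · by_contra hij
      have := hB _ _ hij
      simp only at this
      omega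
    · rfl
  · rw [GSmat_add_shiftQ_pow_mul h12.le h1 h34 h4, mul_assoc M, hC, mul_one, hM, hE]

end

/-- Case `n1 > n2`, `n4 ≥ n3`, `m ≤ n2`: the upper bound is achievable with `G_M = 0`. -/
theorem rate_achievable_case3
    (n1 n2 n3 n4 m q : ℕ) (hq : q = max n1 (max n2 (max n3 (max n4 m))))
    (h12 : n2 < n1) (h34 : n3 ≤ n4) (hm : m ≤ n2) :
    ∃ GA GB : Matrix (Fin q) (Fin q) (ZMod 2),
      GMmat q n3 n4 m GA GB = 0 ∧
      linRate q (GSmat q n1 n2 n3 n4 GA GB) (GMmat q n3 n4 m GA GB)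
        = min n1 (min n4 (n2 + n3 - m)) := by
  set R := min n1 (min n4 (n2 + n3 - m))
  set u := min R (n2 - m)
  let window (p : ℕ → Prop) [DecidablePred p] : Matrix (Fin q) (Fin q) (ZMod 2) :=
    of fun i j => if (i : ℕ) = j + (q - R) ∧ p j then 1 else 0
  have hwindow : window (u ≤ ·) + window (· < u) = shiftQ q ^ (q - R) := by
    ext i j
    simp only [window, Matrix.add_apply, of_apply, shiftQ_pow_apply]
    split_ifs <;> first | omega | decide
  obtain ⟨GA, GB, hGM, hGS⟩ := exists_GMmat_eq_zero_and_GSmat_eq h12 (by omega) h34 (by omega) hm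
    (window (u ≤ ·)) (window (· < u))
    (fun i j hij => by have := (ite_ne_right_iff.mp hij).1; omega)
    (fun i j hij => by have := (ite_ne_right_iff.mp hij).1; omega)
  refine ⟨GA, GB, hGM, ?_⟩
  rw [linRate, hGM, hGS, hwindow, mulVecLin_zero, LinearMap.range_zero, inf_bot_eq, finrank_bot,
    Nat.sub_zero, rank_shiftQ_pow]
  omega
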